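/- arXiv:1803.11139 — 3 statements merged into one kernel-verified Lean document; each statement's English description precedes it below -/
import Mathlib

section
/- In a sequential product space, an effect a is sharp (i.e., the only effect below both a and 1-a is 0) if and only if a & (1-a) = 0, if and only if a & a = a. -/
open scoped BigOperators

/-- A sequential product space: an order unit space `(V, ≤, unit)` with a binary
operation `seq` on its effects satisfying axioms (S1)-(S7). -/
structure SPS (V : Type*) [NormedAddCommGroup V] [NormedSpace ℝ V] [PartialOrder V] where
  unit : V
  seq : V → V → V
  /-- The effects: elements `a` with `0 ≤ a ≤ unit`. -/
  Eff : V → Prop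
  eff_iff : ∀ a : V, Eff a ↔ 0 ≤ a ∧ a ≤ unit
  eff_unit : Eff unit
  /-- `V` is an ordered vector space. -/
  add_le_add_right' : ∀ a b c : V, a ≤ b → a + c ≤ b + c
  smul_le_smul' : ∀ (r : ℝ) (a b : V), 0 ≤ r → a ≤ b → r • a ≤ r • b
  /-- `unit` is a strong unit. -/
  strong : ∀ a : V, ∃ n : ℕ, -((n : ℝ) • unit) ≤ a ∧ a ≤ (n : ℝ) • unit
  /-- Archimedean property. -/
  arch : ∀ a : V, (∀ n : ℕ, a ≤ ((n : ℝ) + 1)⁻¹ • unit) → a ≤ 0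
  /-- The norm of `V` is the order-unit norm. -/
  norm_def : ∀ a : V, ‖a‖ = sInf {r : ℝ | 0 ≤ r ∧ -(r • unit) ≤ a ∧ a ≤ r • unit}
  seq_eff : ∀ a b : V, Eff a → Eff b → Eff (seq a b)
  /-- (S1) additivity in the second argument. -/
  s1 : ∀ a b c : V, Eff a → Eff b → Eff c → Eff (b + c) →
      seq a (b + c) = seq a b + seq a c
  /-- (S2) norm-continuity in the first argument. -/
  s2 : ∀ b : V, Eff b → ContinuousOn (fun a => seq a b) {a : V | Eff a}
  /-- (S3) unitality. -/
  s3 : ∀ a : V, Eff a → seq unit a = a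
  /-- (S4) orthogonal effects are compatible. -/
  s4 : ∀ a b : V, Eff a → Eff b → seq a b = 0 → seq b a = 0
  /-- (S5) associativity for compatible effects. -/
  s5 : ∀ a b c : V, Eff a → Eff b → Eff c → seq a b = seq b a →
      seq a (seq b c) = seq (seq a b) c
  /-- (S6) compatibility is preserved by complements. -/
  s6a : ∀ a b : V, Eff a → Eff b → seq a b = seq b a →
      seq a (unit - b) = seq (unit - b) a
  /-- (S6) compatibility is preserved by sums. -/
  s6b : ∀ a b c : V, Eff a → Eff b → Eff c → Eff (b + c) →
      seq a b = seq b a → seq a c = seq c a → seq a (b + c) = seq (b + c) a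
  /-- (S7) compatibility is preserved by the product. -/
  s7 : ∀ a b c : V, Eff a → Eff b → Eff c →
      seq a b = seq b a → seq a c = seq c a → seq a (seq b c) = seq (seq b c) a

namespace SPS

variable {V : Type*} [NormedAddCommGroup V] [NormedSpace ℝ V] [PartialOrder V]

/-- `a` and `b` are compatible: `a & b = b & a`. -/
def Compat (S : SPS V) (a b : V) : Prop := S.seq a b = S.seq b a

/-- An effect `p` is sharp when the only effect below both `p` and `unit - p` is `0`. -/
def Sharp (S : SPS V) (p : V) : Prop :=
  S.Eff p ∧ ∀ b : V, S.Eff b → b ≤ p → b ≤ S.unit - p → b = 0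

/-- An effect `p` is sharp (idempotence formulation): `p & p = p`. -/
def SharpI (S : SPS V) (p : V) : Prop := S.Eff p ∧ S.seq p p = p

/-- An effect `p` is atomic when `p ≠ 0` and every effect below `p` is a multiple of `p`. -/
def Atomic (S : SPS V) (p : V) : Prop :=
  S.Eff p ∧ p ≠ 0 ∧ ∀ a : V, S.Eff a → a ≤ p → ∃ t : ℝ, 0 ≤ t ∧ t ≤ 1 ∧ a = t • p

/-- `c` is the least sharp effect above `a` (the ceiling `⌈a⌉`). -/
def IsCeil (S : SPS V) (a c : V) : Prop :=
  S.SharpI c ∧ a ≤ c ∧ ∀ d : V, S.SharpI d → a ≤ d → c ≤ d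

/-- `f` is the greatest sharp effect below `a` (the floor `⌊a⌋`). -/
def IsFloor (S : SPS V) (a f : V) : Prop :=
  S.SharpI f ∧ f ≤ a ∧ ∀ d : V, S.SharpI d → d ≤ a → d ≤ f

end SPS

section Helpers

variable {V : Type*} [NormedAddCommGroup V] [NormedSpace ℝ V] [PartialOrder V] (S : SPS V)

lemma SPS.eff_zero : S.Eff 0 := by
  rw [S.eff_iff]
  exact ⟨le_refl 0, ((S.eff_iff S.unit).mp S.eff_unit).1⟩

lemma SPS.eff_compl {a : V} (h : S.Eff a) : S.Eff (S.unit - a) := by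
  rw [S.eff_iff] at h ⊢
  constructor
  · have := S.add_le_add_right' a S.unit (-a) h.2
    simpa [sub_eq_add_neg] using this
  · have := S.add_le_add_right' 0 a (S.unit - a) h.1
    have e : a + (S.unit - a) = S.unit := by abel
    rw [zero_add, e] at this
    exact this

lemma SPS.seq_zero {a : V} (ha : S.Eff a) : S.seq a 0 = 0 := by
  have h : S.seq a (0 + 0) = S.seq a 0 + S.seq a 0 :=
    S.s1 a 0 0 ha S.eff_zero S.eff_zero (by simpa using S.eff_zero)
  rw [add_zero] at h
  exact (left_eq_add.mp h)

lemma SPS.seq_unit {a : V} (ha : S.Eff a) : S.seq a S.unit = a := by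
  have h0 : S.seq a 0 = 0 := S.seq_zero ha
  have h0' : S.seq 0 a = 0 := S.s4 a 0 ha S.eff_zero h0
  have hc : S.seq a 0 = S.seq 0 a := by rw [h0, h0']
  have := S.s6a a 0 ha S.eff_zero hc
  rw [sub_zero] at this
  rw [this, S.s3 a ha]

lemma SPS.seq_nonneg {a b : V} (ha : S.Eff a) (hb : S.Eff b) : 0 ≤ S.seq a b :=
  ((S.eff_iff _).mp (S.seq_eff a b ha hb)).1

lemma SPS.seq_mono {a b c : V} (ha : S.Eff a) (hb : S.Eff b) (hc : S.Eff c)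
    (h : b ≤ c) : S.seq a b ≤ S.seq a c := by
  rw [S.eff_iff] at hb hc
  have hd : S.Eff (c - b) := by
    rw [S.eff_iff]
    constructor
    · have := S.add_le_add_right' b c (-b) h
      simpa [sub_eq_add_neg] using this
    · have h1 := S.add_le_add_right' 0 b (c - b) hb.1
      have e : b + (c - b) = c := by abel
      rw [zero_add, e] at h1
      exact h1.trans hc.2
  have hbc : S.Eff (b + (c - b)) := by
    have e : b + (c - b) = c := by abel
    rw [e, S.eff_iff]; exact hc
  have hs := S.s1 a b (c - b) ha (by rw [S.eff_iff]; exact hb) hd hbc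
  have e : b + (c - b) = c := by abel
  rw [e] at hs
  have hpos : 0 ≤ S.seq a (c - b) := S.seq_nonneg ha hd
  have := S.add_le_add_right' 0 (S.seq a (c - b)) (S.seq a b) hpos
  rw [zero_add] at this
  rw [hs, add_comm]
  exact this

end Helpers

/-- `a` is sharp iff `a & (1-a) = 0` iff `a & a = a`. -/
theorem sharp_iff_seq_compl_eq_zero_iff_idem {V : Type*} [NormedAddCommGroup V]
    [NormedSpace ℝ V] [PartialOrder V] (S : SPS V) (a : V) (ha : S.Eff a) :
    ((∀ b : V, S.Eff b → b ≤ a → b ≤ S.unit - a → b = 0) ↔ S.seq a (S.unit - a) = 0) ∧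
      (S.seq a (S.unit - a) = 0 ↔ S.seq a a = a) := by
  set a' := S.unit - a with ha'def
  have ha' : S.Eff a' := S.eff_compl ha
  have haU := ((S.eff_iff a).mp ha)
  have ha'U := ((S.eff_iff a').mp ha')
  have hcomm : S.seq a a' = S.seq a' a := S.s6a a a ha ha rfl
  have hsum : a + a' = S.unit := by rw [ha'def]; abel
  have hsplit : a = S.seq a a + S.seq a a' := by
    have h1 := S.s1 a a a' ha ha ha' (by rw [hsum]; exact S.eff_unit)
    rw [hsum, S.seq_unit ha] at h1
    exact h1
  constructor
  · constructor
    · intro hs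
      refine hs (S.seq a a') (S.seq_eff a a' ha ha') ?_ ?_
      · have := S.seq_mono ha ha' S.eff_unit ha'U.2
        rwa [S.seq_unit ha] at this
      · rw [hcomm]
        have := S.seq_mono ha' ha S.eff_unit haU.2
        rwa [S.seq_unit ha'] at this
    · intro h0 b hb hba hba'
      have ha'a0 : S.seq a' a = 0 := S.s4 a a' ha ha' h0
      have hab : S.seq a b = 0 := by
        have h1 : S.seq a b ≤ S.seq a a' := S.seq_mono ha hb ha' hba'
        rw [h0] at h1
        exact le_antisymm h1 (S.seq_nonneg ha hb)
      have hba0 : S.seq b a = 0 := S.s4 a b ha hb hab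
      have ha'b : S.seq a' b = 0 := by
        have h1 : S.seq a' b ≤ S.seq a' a := S.seq_mono ha' hb ha hba
        rw [ha'a0] at h1
        exact le_antisymm h1 (S.seq_nonneg ha' hb)
      have hba'0 : S.seq b a' = 0 := S.s4 a' b ha' hb ha'b
      have hsplitb := S.s1 b a a' hb ha ha' (by rw [hsum]; exact S.eff_unit)
      rw [hsum, S.seq_unit hb, hba0, hba'0, add_zero] at hsplitb
      exact hsplitb
  · constructor
    · intro h0
      rw [h0, add_zero] at hsplit
      exact hsplit.symm
    · intro hidem
      rw [hidem] at hsplit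
      exact (left_eq_add.mp hsplit)
end

section
/- In a sequential product space, for a sharp effect p and an arbitrary effect a: p ≤ a if and only if p & a = a & p = p. -/
open scoped BigOperators

namespace SPS

variable {V : Type*} [NormedAddCommGroup V] [NormedSpace ℝ V] [PartialOrder V]

section Aux

lemma le_iff_sub' (S : SPS V) (a b : V) : a ≤ b ↔ 0 ≤ b - a := by
  constructor
  · intro h; simpa [sub_eq_add_neg] using S.add_le_add_right' a b (-a) h
  · intro h; simpa [sub_add_cancel] using S.add_le_add_right' 0 (b - a) a h

lemma eff_zero' (S : SPS V) : S.Eff 0 := by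
  rw [S.eff_iff]; exact ⟨le_refl 0, ((S.eff_iff S.unit).mp S.eff_unit).1⟩

lemma eff_compl' (S : SPS V) {a : V} (h : S.Eff a) : S.Eff (S.unit - a) := by
  rw [S.eff_iff] at h ⊢
  refine ⟨(S.le_iff_sub' a S.unit).mp h.2, ?_⟩
  rw [S.le_iff_sub']; simpa using h.1

lemma eff_sub' (S : SPS V) {a b : V} (ha : S.Eff a) (hb : S.Eff b) (hab : a ≤ b) :
    S.Eff (b - a) := by
  rw [S.eff_iff] at ha hb ⊢
  refine ⟨(S.le_iff_sub' a b).mp hab, le_trans ?_ hb.2⟩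
  rw [S.le_iff_sub']; simpa using ha.1

lemma seq_zero' (S : SPS V) {a : V} (ha : S.Eff a) : S.seq a 0 = 0 := by
  have h := S.s1 a 0 0 ha S.eff_zero' S.eff_zero' (by simpa using S.eff_zero')
  rw [add_zero] at h
  exact (add_eq_left).mp h.symm

lemma zero_seq' (S : SPS V) {a : V} (ha : S.Eff a) : S.seq 0 a = 0 :=
  S.s4 a 0 ha S.eff_zero' (S.seq_zero' ha)

lemma seq_unit' (S : SPS V) {a : V} (ha : S.Eff a) : S.seq a S.unit = a := by
  have hc : S.seq a 0 = S.seq 0 a := by rw [S.seq_zero' ha, S.zero_seq' ha]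
  have h := S.s6a a 0 ha S.eff_zero' hc
  rw [sub_zero] at h
  rw [h, S.s3 a ha]

lemma seq_nonneg' (S : SPS V) {a b : V} (ha : S.Eff a) (hb : S.Eff b) : 0 ≤ S.seq a b :=
  ((S.eff_iff _).mp (S.seq_eff a b ha hb)).1

lemma seq_compl' (S : SPS V) {a b : V} (ha : S.Eff a) (hb : S.Eff b) :
    S.seq a (S.unit - b) = a - S.seq a b := by
  have key : b + (S.unit - b) = S.unit := by abel
  have h := S.s1 a b (S.unit - b) ha hb (S.eff_compl' hb) (by rw [key]; exact S.eff_unit)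
  rw [key, S.seq_unit' ha] at h
  rw [eq_sub_iff_add_eq, add_comm, ← h]

lemma seq_mono' (S : SPS V) {a b c : V} (ha : S.Eff a) (hb : S.Eff b) (hc : S.Eff c)
    (h : b ≤ c) : S.seq a b ≤ S.seq a c := by
  have hcb : S.Eff (c - b) := S.eff_sub' hb hc h
  have key : b + (c - b) = c := by abel
  have h1 := S.s1 a b (c - b) ha hb hcb (by rw [key]; exact hc)
  rw [key] at h1
  rw [h1, S.le_iff_sub']
  simpa using S.seq_nonneg' ha hcb

/-- A sharp effect is idempotent. -/
lemma sharp_idem' (S : SPS V) {p : V} (hp : S.Sharp p) : S.seq p p = p := by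
  obtain ⟨hpE, hsharp⟩ := hp
  have h1p : S.Eff (S.unit - p) := S.eff_compl' hpE
  set b := S.seq p (S.unit - p) with hb
  have hcompat : S.seq p (S.unit - p) = S.seq (S.unit - p) p :=
    S.s6a p p hpE hpE rfl
  have hbE : S.Eff b := S.seq_eff _ _ hpE h1p
  have hb1 : b ≤ p := by
    have := S.seq_mono' hpE h1p S.eff_unit ((S.eff_iff _).mp h1p).2
    rwa [S.seq_unit' hpE] at this
  have hb2 : b ≤ S.unit - p := by
    have := S.seq_mono' h1p hpE S.eff_unit ((S.eff_iff _).mp hpE).2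
    rw [S.seq_unit' h1p] at this
    rwa [hb, hcompat]
  have hb0 : b = 0 := hsharp b hbE hb1 hb2
  have := S.seq_compl' hpE hpE
  rw [← hb, hb0] at this
  exact (sub_eq_zero.mp this.symm).symm

end Aux

end SPS

/-- for sharp `p`: `p ≤ a` iff `p & a = a & p = p`. -/
theorem sharp_le_iff {V : Type*} [NormedAddCommGroup V] [NormedSpace ℝ V]
    [PartialOrder V] (S : SPS V) (p a : V) (hp : S.Sharp p) (ha : S.Eff a) :
    p ≤ a ↔ S.seq p a = p ∧ S.seq a p = p := by
  have hpE : S.Eff p := hp.1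
  have h1a : S.Eff (S.unit - a) := S.eff_compl' ha
  have h1p : S.Eff (S.unit - p) := S.eff_compl' hpE
  constructor
  · intro h
    -- p & p = p since p is sharp
    have hpp : S.seq p p = p := S.sharp_idem' hp
    -- 1 - a ≤ 1 - p
    have hcompl : S.unit - a ≤ S.unit - p := by
      rw [S.le_iff_sub'] at h ⊢
      have : S.unit - p - (S.unit - a) = a - p := by abel
      rwa [this]
    -- p & (1 - a) = 0
    have h0 : S.seq p (S.unit - a) = 0 := by
      have hle : S.seq p (S.unit - a) ≤ S.seq p (S.unit - p) :=
        S.seq_mono' hpE h1a h1p hcompl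
      have hzero : S.seq p (S.unit - p) = 0 := by
        rw [S.seq_compl' hpE hpE, hpp, sub_self]
      rw [hzero] at hle
      exact le_antisymm hle (S.seq_nonneg' hpE h1a)
    -- p & a = p
    have hpa : S.seq p a = p := by
      have := S.seq_compl' hpE ha
      rw [h0] at this
      exact (sub_eq_zero.mp this.symm).symm
    -- (1 - a) & p = 0, hence p and (1-a) are compatible
    have h0' : S.seq (S.unit - a) p = 0 := S.s4 p (S.unit - a) hpE h1a h0
    have hcomm : S.seq p (S.unit - (S.unit - a)) = S.seq (S.unit - (S.unit - a)) p :=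
      S.s6a p (S.unit - a) hpE h1a (h0.trans h0'.symm)
    rw [sub_sub_cancel] at hcomm
    exact ⟨hpa, hcomm ▸ hpa⟩
  · rintro ⟨h1, h2⟩
    -- p and a are compatible
    have hcompat : S.seq p a = S.seq a p := h1.trans h2.symm
    -- p & (1 - a) = 0
    have h0 : S.seq p (S.unit - a) = 0 := by
      rw [S.seq_compl' hpE ha, h1, sub_self]
    -- (1 - a) & p = 0
    have h0' : S.seq (S.unit - a) p = 0 := by
      have := S.s6a p a hpE ha hcompat
      rw [h0] at this
      exact this.symm
    -- (1 - a) and p are compatible, so (1 - a) and (1 - p) are compatible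
    have hcomm2 : S.seq (S.unit - a) (S.unit - p) = S.seq (S.unit - p) (S.unit - a) :=
      S.s6a (S.unit - a) p h1a hpE (h0'.trans h0.symm)
    -- (1 - a) & (1 - p) = 1 - a
    have hval : S.seq (S.unit - a) (S.unit - p) = S.unit - a := by
      rw [S.seq_compl' h1a hpE, h0', sub_zero]
    -- hence 1 - a = (1 - p) & (1 - a) ≤ (1 - p) & 1 = 1 - p
    have hle : S.unit - a ≤ S.unit - p := by
      have hmono : S.seq (S.unit - p) (S.unit - a) ≤ S.seq (S.unit - p) S.unit :=
        S.seq_mono' h1p h1a S.eff_unit ((S.eff_iff _).mp h1a).2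
      rw [S.seq_unit' h1p, ← hcomm2, hval] at hmono
      exact hmono
    rw [S.le_iff_sub'] at hle ⊢
    have : S.unit - p - (S.unit - a) = a - p := by abel
    rwa [this] at hle
end

section
/- In a finite-dimensional sequential product space, if a and b are effects with b & a = 0, then b & ⌈a⌉ = 0, where ⌈a⌉ is the least sharp effect above a. -/
open scoped BigOperators

/-!
Put `e = 1 - b`. From `b & a = 0` one gets `a & b = 0`, hence `e & a = a & e = a`, so `a` lies below
every sequential power `eⁿ`. These powers decrease, and by compactness of the unit ball (finite
dimension) they converge to an effect `d`; passing to the limit in `eⁿ⁺¹ = e & eⁿ` and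
`eⁿ & d = d` shows that `d` is idempotent, hence sharp, and that it is compatible with `b`.
Now `a ≤ d ≤ e = 1 - b` and sharpness of `d` force `b & d = 0`, while minimality of the ceiling
gives `⌈a⌉ ≤ d`, so `b & ⌈a⌉ ≤ b & d = 0`.
-/

open Filter Topology

namespace SPS

variable {V : Type*} [NormedAddCommGroup V] [NormedSpace ℝ V] [PartialOrder V]

theorem isOrderedAddMonoid (S : SPS V) : IsOrderedAddMonoid V :=
  ⟨fun a b h c => S.add_le_add_right' a b c h, fun a b h c => by
    simpa only [add_comm c] using S.add_le_add_right' a b c h⟩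

variable (S : SPS V)

theorem eff_nonneg {x : V} (hx : S.Eff x) : 0 ≤ x := ((S.eff_iff x).1 hx).1

theorem eff_le_unit {x : V} (hx : S.Eff x) : x ≤ S.unit := ((S.eff_iff x).1 hx).2

theorem unit_nonneg : (0 : V) ≤ S.unit := S.eff_nonneg S.eff_unit

theorem eff_zero_s13 : S.Eff 0 := (S.eff_iff 0).2 ⟨le_rfl, S.unit_nonneg⟩

theorem smul_unit_nonneg {r : ℝ} (hr : 0 ≤ r) : 0 ≤ r • S.unit := by
  simpa using S.smul_le_smul' r 0 _ hr S.unit_nonneg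

theorem norm_le_of_le_smul_unit {y : V} {r : ℝ} (hr : 0 ≤ r) (h_lower : -(r • S.unit) ≤ y)
    (h_upper : y ≤ r • S.unit) : ‖y‖ ≤ r := by
  rw [S.norm_def]
  exact csInf_le ⟨0, fun _ hs => hs.1⟩ ⟨hr, h_lower, h_upper⟩

theorem seq_zero_right {x : V} (hx : S.Eff x) : S.seq x 0 = 0 := by
  simpa using S.s1 x 0 0 hx S.eff_zero_s13 S.eff_zero_s13 (by simpa using S.eff_zero_s13)

theorem seq_unit_right {x : V} (hx : S.Eff x) : S.seq x S.unit = x := by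
  have h_zero : S.seq 0 x = 0 := S.s4 x 0 hx S.eff_zero_s13 (S.seq_zero_right hx)
  have h_compat := S.s6a x 0 hx S.eff_zero_s13 (by rw [S.seq_zero_right hx, h_zero])
  rw [sub_zero] at h_compat
  rw [h_compat, S.s3 x hx]

theorem tendsto_seq_left {y l : V} {f : ℕ → V} (hy : S.Eff y) (hl : S.Eff l)
    (hf : ∀ n, S.Eff (f n)) (h : Tendsto f atTop (𝓝 l)) :
    Tendsto (fun n => S.seq (f n) y) atTop (𝓝 (S.seq l y)) :=
  ((S.s2 y hy) l hl).tendsto.comp (tendsto_nhdsWithin_iff.2 ⟨h, .of_forall hf⟩)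

def seqPow (x : V) : ℕ → V
  | 0 => S.unit
  | n + 1 => S.seq x (seqPow x n)

theorem seqPow_succ (x : V) (n : ℕ) : S.seqPow x (n + 1) = S.seq x (S.seqPow x n) := rfl

theorem seqPow_one {x : V} (hx : S.Eff x) : S.seqPow x 1 = x := S.seq_unit_right hx

theorem eff_seqPow {x : V} (hx : S.Eff x) : ∀ n, S.Eff (S.seqPow x n)
  | 0 => S.eff_unit
  | n + 1 => S.seq_eff _ _ hx (eff_seqPow hx n)

theorem compat_seqPow {x y : V} (hx : S.Eff x) (hy : S.Eff y) (h : S.Compat y x) :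
    ∀ n, S.Compat y (S.seqPow x n)
  | 0 => (S.seq_unit_right hy).trans (S.s3 y hy).symm
  | n + 1 => S.s7 y x _ hy hx (S.eff_seqPow hx n) h (compat_seqPow hx hy h n)

theorem seqPow_seq_of_seq_eq {x d : V} (hx : S.Eff x) (hd : S.Eff d) (h : S.seq x d = d) :
    ∀ n, S.seq (S.seqPow x n) d = d
  | 0 => S.s3 d hd
  | n + 1 => by
    rw [S.seqPow_succ, ← S.s5 x _ d hx (S.eff_seqPow hx n) hd (S.compat_seqPow hx hx rfl n),
      seqPow_seq_of_seq_eq hx hd h n, h]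

theorem eff_of_tendsto_seqPow [OrderClosedTopology V] {e d : V} (he : S.Eff e)
    (hd : Tendsto (S.seqPow e) atTop (𝓝 d)) : S.Eff d :=
  (S.eff_iff d).2 ⟨ge_of_tendsto' hd fun n => S.eff_nonneg (S.eff_seqPow he n),
    le_of_tendsto' hd fun n => S.eff_le_unit (S.eff_seqPow he n)⟩

section OrderedSpace

variable [IsOrderedAddMonoid V]

theorem smul_unit_mono {r s : ℝ} (h : r ≤ s) : r • S.unit ≤ s • S.unit := by
  rw [← sub_nonneg, ← sub_smul]
  exact S.smul_unit_nonneg (sub_nonneg.2 h)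

theorem le_smul_unit_of_norm_lt {y : V} {r : ℝ} (h : ‖y‖ < r) :
    -(r • S.unit) ≤ y ∧ y ≤ r • S.unit := by
  have h_nonempty : {r : ℝ | 0 ≤ r ∧ -(r • S.unit) ≤ y ∧ y ≤ r • S.unit}.Nonempty :=
    let ⟨n, hn⟩ := S.strong y; ⟨n, n.cast_nonneg, hn⟩
  rw [S.norm_def] at h
  obtain ⟨s, ⟨-, hs_lower, hs_upper⟩, hsr⟩ := exists_lt_of_csInf_lt h_nonempty h
  exact ⟨(neg_le_neg (S.smul_unit_mono hsr.le)).trans hs_lower,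
    hs_upper.trans (S.smul_unit_mono hsr.le)⟩

theorem norm_le_of_nonneg_of_le_smul_unit {y : V} {r : ℝ} (hr : 0 ≤ r) (hy : 0 ≤ y)
    (h : y ≤ r • S.unit) : ‖y‖ ≤ r :=
  S.norm_le_of_le_smul_unit hr ((neg_nonpos.2 (S.smul_unit_nonneg hr)).trans hy) h

theorem norm_le_one_of_eff {x : V} (hx : S.Eff x) : ‖x‖ ≤ 1 :=
  S.norm_le_of_nonneg_of_le_smul_unit zero_le_one (S.eff_nonneg hx)
    (by rw [one_smul]; exact S.eff_le_unit hx)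

theorem norm_le_norm_of_nonneg_of_le (S : SPS V) {x y : V} (hx : 0 ≤ x) (hxy : x ≤ y) :
    ‖x‖ ≤ ‖y‖ :=
  le_of_forall_gt_imp_ge_of_dense fun _ hr =>
    S.norm_le_of_nonneg_of_le_smul_unit ((norm_nonneg y).trans hr.le) hx
      (hxy.trans (S.le_smul_unit_of_norm_lt hr).2)

theorem isClosed_nonneg (S : SPS V) : IsClosed {x : V | 0 ≤ x} := by
  refine IsSeqClosed.isClosed fun f l hf hfl => ?_
  suffices -l ≤ 0 from neg_nonpos.1 this
  refine S.arch _ fun n => ?_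
  obtain ⟨N, hN⟩ := NormedAddCommGroup.tendsto_atTop.1 hfl _
    (by positivity : (0 : ℝ) < ((n : ℝ) + 1)⁻¹)
  calc -l ≤ f N - l := by simpa [sub_eq_add_neg] using hf N
    _ ≤ _ := (S.le_smul_unit_of_norm_lt (hN N le_rfl)).2

theorem orderClosedTopology (S : SPS V) : OrderClosedTopology V := by
  refine ⟨?_⟩
  simpa only [Set.preimage_ofPred_eq, Pi.sub_apply, sub_nonneg] using
    S.isClosed_nonneg.preimage (continuous_snd.sub continuous_fst)

theorem eff_sub {x y : V} (hx : S.Eff x) (hy : S.Eff y) (hxy : x ≤ y) : S.Eff (y - x) :=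
  (S.eff_iff _).2 ⟨sub_nonneg.2 hxy, (sub_le_self y (S.eff_nonneg hx)).trans (S.eff_le_unit hy)⟩

theorem eff_compl_s13 {x : V} (hx : S.Eff x) : S.Eff (S.unit - x) :=
  S.eff_sub hx S.eff_unit (S.eff_le_unit hx)

theorem seq_add_seq_compl {x y : V} (hx : S.Eff x) (hy : S.Eff y) :
    S.seq x y + S.seq x (S.unit - y) = x := by
  rw [← S.s1 x y _ hx hy (S.eff_compl_s13 hy) (by simpa using S.eff_unit), add_sub_cancel,
    S.seq_unit_right hx]

theorem seq_mono_right {x y z : V} (hx : S.Eff x) (hy : S.Eff y) (hz : S.Eff z) (hyz : y ≤ z) :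
    S.seq x y ≤ S.seq x z := by
  have h_split := S.s1 x y (z - y) hx hy (S.eff_sub hy hz hyz) (by simpa using hz)
  rw [add_sub_cancel] at h_split
  rw [h_split]
  exact le_add_of_nonneg_right (S.eff_nonneg (S.seq_eff _ _ hx (S.eff_sub hy hz hyz)))

theorem seq_le_left {x y : V} (hx : S.Eff x) (hy : S.Eff y) : S.seq x y ≤ x := by
  simpa [S.seq_unit_right hx] using S.seq_mono_right hx hy S.eff_unit (S.eff_le_unit hy)

theorem eff_nsmul {y : V} (hy : S.Eff y) {m : ℕ} (h : m • y ≤ S.unit) : S.Eff (m • y) :=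
  (S.eff_iff _).2 ⟨nsmul_nonneg (S.eff_nonneg hy) m, h⟩

theorem seq_nsmul {x y : V} (hx : S.Eff x) (hy : S.Eff y) :
    ∀ m : ℕ, m • y ≤ S.unit → S.seq x (m • y) = m • S.seq x y
  | 0, _ => by simp [S.seq_zero_right hx]
  | m + 1, hm => by
    have hmy : m • y ≤ S.unit := (nsmul_le_nsmul_left (S.eff_nonneg hy) m.le_succ).trans hm
    have h_sum : S.Eff (m • y + y) := succ_nsmul y m ▸ S.eff_nsmul hy hm
    rw [succ_nsmul, S.s1 x _ y hx (S.eff_nsmul hy hmy) hy h_sum, seq_nsmul hx hy m hmy,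
      succ_nsmul]

theorem seq_le_inv_smul_unit {x y : V} (hx : S.Eff x) (hy : S.Eff y) {m : ℕ} (hm : 0 < m)
    (h : y ≤ (m : ℝ)⁻¹ • S.unit) : S.seq x y ≤ (m : ℝ)⁻¹ • S.unit := by
  have hm' : (m : ℝ) ≠ 0 := by positivity
  have h_inv_smul (z : V) : (m : ℝ)⁻¹ • m • z = z := by
    rw [← Nat.cast_smul_eq_nsmul ℝ, smul_smul, inv_mul_cancel₀ hm', one_smul]
  have h_my : m • y ≤ S.unit := by
    simpa only [← Nat.cast_smul_eq_nsmul ℝ, smul_smul, mul_inv_cancel₀ hm', one_smul] using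
      nsmul_le_nsmul_right h m
  have h_mseq : m • S.seq x y ≤ S.unit := by
    rw [← S.seq_nsmul hx hy m h_my]
    exact S.eff_le_unit (S.seq_eff _ _ hx (S.eff_nsmul hy h_my))
  simpa only [h_inv_smul] using S.smul_le_smul' (m : ℝ)⁻¹ _ _ (by positivity) h_mseq

theorem tendsto_seq_right_zero {x : V} {f : ℕ → V} (hx : S.Eff x) (hf : ∀ n, S.Eff (f n))
    (h : Tendsto f atTop (𝓝 0)) : Tendsto (fun n => S.seq x (f n)) atTop (𝓝 0) := by
  rw [NormedAddGroup.tendsto_nhds_zero] at h ⊢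
  intro ε hε
  obtain ⟨m, hm⟩ := exists_nat_gt ε⁻¹
  have hm_pos : (0 : ℝ) < m := (inv_pos.2 hε).trans hm
  filter_upwards [h (m : ℝ)⁻¹ (inv_pos.2 hm_pos)] with n hn
  have h_seq := S.seq_le_inv_smul_unit hx (hf n) (Nat.cast_pos.1 hm_pos)
    (S.le_smul_unit_of_norm_lt hn).2
  calc ‖S.seq x (f n)‖ ≤ (m : ℝ)⁻¹ :=
        S.norm_le_of_nonneg_of_le_smul_unit (by positivity)
          (S.eff_nonneg (S.seq_eff _ _ hx (hf n))) h_seq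
    _ < ε := inv_lt_of_inv_lt₀ hε hm

-- (S2) is continuity in the first argument only; in the second, additivity yields it from above.
theorem tendsto_seq_right_of_le {x l : V} {f : ℕ → V} (hx : S.Eff x) (hl : S.Eff l)
    (hf : ∀ n, S.Eff (f n)) (hlf : ∀ n, l ≤ f n) (h : Tendsto f atTop (𝓝 l)) :
    Tendsto (fun n => S.seq x (f n)) atTop (𝓝 (S.seq x l)) := by
  have h_split (n : ℕ) : S.seq x (f n) = S.seq x l + S.seq x (f n - l) := by
    simpa using S.s1 x l (f n - l) hx hl (S.eff_sub hl (hf n) (hlf n)) (by simpa using hf n)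
  simp_rw [h_split]
  simpa using tendsto_const_nhds.add (S.tendsto_seq_right_zero hx
    (fun n => S.eff_sub hl (hf n) (hlf n)) (by simpa using h.sub_const l))

theorem seqPow_antitone {x : V} (hx : S.Eff x) : Antitone (S.seqPow x) := by
  refine antitone_nat_of_succ_le fun n => ?_
  induction n with
  | zero => exact (S.seqPow_one hx).trans_le (S.eff_le_unit hx)
  | succ n ih => exact S.seq_mono_right hx (S.eff_seqPow hx _) (S.eff_seqPow hx n) ih

theorem le_seqPow_of_seq_eq {x a : V} (hx : S.Eff x) (ha : S.Eff a) (h : S.seq x a = a) :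
    ∀ n, a ≤ S.seqPow x n
  | 0 => S.eff_le_unit ha
  | n + 1 => h ▸ S.seq_mono_right hx ha (S.eff_seqPow hx n) (le_seqPow_of_seq_eq hx ha h n)

theorem sharp_of_sharpI {p : V} (hp : S.SharpI p) : S.Sharp p := by
  obtain ⟨hp_eff, hpp⟩ := hp
  have hq_eff := S.eff_compl_s13 hp_eff
  have hpq : S.seq p (S.unit - p) = 0 := by
    simpa [hpp] using S.seq_add_seq_compl hp_eff hp_eff
  refine ⟨hp_eff, fun x hx hxp hxq => ?_⟩
  have h_zero_of_le {y z : V} (hy : S.Eff y) (hz : S.Eff z) (hyz : S.seq y z = 0)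
      (hxz : x ≤ z) : S.seq x y = 0 :=
    S.s4 y x hy hx (le_antisymm (hyz ▸ S.seq_mono_right hy hx hz hxz)
      (S.eff_nonneg (S.seq_eff _ _ hy hx)))
  have hxp' : S.seq x p = 0 := h_zero_of_le hp_eff hq_eff hpq hxq
  have hxq' : S.seq x (S.unit - p) = 0 :=
    h_zero_of_le hq_eff hp_eff ((S.s6a p p hp_eff hp_eff rfl).symm.trans hpq) hxp
  simpa [hxp', hxq'] using (S.seq_add_seq_compl hx hp_eff).symm

theorem seq_eq_zero_of_le_compl {b d : V} (hb : S.Eff b) (hd : S.Sharp d)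
    (h_compat : S.Compat b d) (h : b ≤ S.unit - d) : S.seq b d = 0 :=
  hd.2 _ (S.seq_eff _ _ hb hd.1) (h_compat ▸ S.seq_le_left hd.1 hb)
    ((S.seq_le_left hb hd.1).trans h)

theorem seq_compl_eq_of_seq_eq_zero {a b : V} (ha : S.Eff a) (hb : S.Eff b)
    (h : S.seq b a = 0) : S.seq (S.unit - b) a = a := by
  have hab : S.seq a b = 0 := S.s4 b a hb ha h
  rw [← S.s6a a b ha hb (hab.trans h.symm)]
  simpa [hab] using S.seq_add_seq_compl ha hb

variable [OrderClosedTopology V]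

theorem tendsto_of_antitone_of_tendsto_subseq (S : SPS V) {f : ℕ → V} {φ : ℕ → ℕ} {d : V}
    (hf : Antitone f) (hφ : StrictMono φ) (h : Tendsto (f ∘ φ) atTop (𝓝 d)) :
    Tendsto f atTop (𝓝 d) := by
  have hdf (n : ℕ) : d ≤ f n :=
    le_of_tendsto h ((hφ.tendsto_atTop.eventually_ge_atTop n).mono fun _ hk => hf hk)
  have h_anti : Antitone fun n => ‖f n - d‖ := fun _ _ hmn =>
    S.norm_le_norm_of_nonneg_of_le (sub_nonneg.2 (hdf _)) (sub_le_sub_right (hf hmn) d)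
  rw [tendsto_iff_norm_sub_tendsto_zero] at h ⊢
  exact (tendsto_iff_tendsto_subseq_of_antitone h_anti hφ.tendsto_atTop).2 h

theorem exists_tendsto_of_antitone [FiniteDimensional ℝ V] {f : ℕ → V}
    (hf_eff : ∀ n, S.Eff (f n)) (hf : Antitone f) : ∃ d, Tendsto f atTop (𝓝 d) :=
  let ⟨d, _, _, hφ, hφd⟩ := (isCompact_closedBall (0 : V) 1).tendsto_subseq
    fun n => mem_closedBall_zero_iff.2 (S.norm_le_one_of_eff (hf_eff n))
  ⟨d, S.tendsto_of_antitone_of_tendsto_subseq hf hφ hφd⟩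

theorem tendsto_seq_seqPow {e d x : V} (he : S.Eff e) (hd : Tendsto (S.seqPow e) atTop (𝓝 d))
    (hx : S.Eff x) : Tendsto (fun n => S.seq x (S.seqPow e n)) atTop (𝓝 (S.seq x d)) :=
  S.tendsto_seq_right_of_le hx (S.eff_of_tendsto_seqPow he hd) (S.eff_seqPow he)
    ((S.seqPow_antitone he).le_of_tendsto hd) hd

theorem sharpI_of_tendsto_seqPow {e d : V} (he : S.Eff e)
    (hd : Tendsto (S.seqPow e) atTop (𝓝 d)) : S.SharpI d := by
  have hd_eff := S.eff_of_tendsto_seqPow he hd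
  have hed : S.seq e d = d :=
    tendsto_nhds_unique (S.tendsto_seq_seqPow he hd he) (hd.comp (tendsto_add_atTop_nat 1))
  refine ⟨hd_eff, tendsto_nhds_unique
    (S.tendsto_seq_left hd_eff hd_eff (S.eff_seqPow he) hd) ?_⟩
  simpa only [S.seqPow_seq_of_seq_eq he hd_eff hed] using tendsto_const_nhds

theorem compat_of_tendsto_seqPow {e d b : V} (he : S.Eff e)
    (hd : Tendsto (S.seqPow e) atTop (𝓝 d)) (hb : S.Eff b) (h : S.Compat b e) : S.Compat b d :=
  tendsto_nhds_unique (S.tendsto_seq_seqPow he hd hb) <|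
    (tendsto_congr (S.compat_seqPow he hb h)).2 <|
      S.tendsto_seq_left hb (S.eff_of_tendsto_seqPow he hd) (S.eff_seqPow he) hd

end OrderedSpace

end SPS

/-- if `b & a = 0` then `b & ⌈a⌉ = 0`. -/
theorem seq_ceil_eq_zero {V : Type*} [NormedAddCommGroup V] [NormedSpace ℝ V]
    [PartialOrder V] [FiniteDimensional ℝ V] (S : SPS V) (a b c : V)
    (ha : S.Eff a) (hb : S.Eff b) (h : S.seq b a = 0) (hc : S.IsCeil a c) :
    S.seq b c = 0 := by
  have := S.isOrderedAddMonoid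
  have := S.orderClosedTopology
  obtain ⟨⟨hc_eff, -⟩, -, hc_min⟩ := hc
  have he := S.eff_compl_s13 hb
  obtain ⟨d, hd⟩ := S.exists_tendsto_of_antitone (S.eff_seqPow he) (S.seqPow_antitone he)
  have hd_eff := S.eff_of_tendsto_seqPow he hd
  have hd_sharp := S.sharpI_of_tendsto_seqPow he hd
  have had : a ≤ d :=
    ge_of_tendsto' hd (S.le_seqPow_of_seq_eq he ha (S.seq_compl_eq_of_seq_eq_zero ha hb h))
  have hdb : d ≤ S.unit - b := by
    simpa [S.seqPow_one he] using (S.seqPow_antitone he).le_of_tendsto hd 1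
  have hbd : S.seq b d = 0 :=
    S.seq_eq_zero_of_le_compl hb (S.sharp_of_sharpI hd_sharp)
      (S.compat_of_tendsto_seqPow he hd hb (S.s6a b b hb hb rfl)) (le_sub_comm.1 hdb)
  refine le_antisymm ?_ (S.eff_nonneg (S.seq_eff b c hb hc_eff))
  simpa [hbd] using S.seq_mono_right hb hc_eff hd_eff (hc_min d hd_sharp had)
end
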